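/- arXiv:1911.08632 — 2 statements merged into one kernel-verified Lean document; each statement's English description precedes it below -/
import Mathlib

section
/- For the path-counting flow domain (ℕ, +, 0) with edge functions {id, 0}: for a finite graph (N, e) whose nonzero edges form an acyclic relation, and any inflow in : N → ℕ, the flow equation has a unique solution, and flow(n) counts the number of distinct paths from nodes n0 (weighted by in(n0)) to n along nonzero edges. -/
/-!
When the identity edges are acyclic, a path is a duplicate-free list of nodes of `N`, so each
node has finitely many paths into it. Splitting off the last edge, a path to `n` is either `[n]`
or a path to an identity-predecessor `n'` of `n` followed by `n`; summing start weights over this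
decomposition shows that the weighted path count satisfies the flow equation. Any two solutions
agree by well-founded induction along the acyclic edge relation, because `flo n` depends only on
the values at the identity-predecessors of `n`.
-/

def FlowEqn {ι : Type*} (N : Finset ι) (e : ι → ι → ℕ → ℕ) (inf flo : ι → ℕ) : Prop :=
  ∀ n ∈ N, flo n = inf n + ∑ n' ∈ N, e n' n (flo n')

/-- l is a path ending at n along identity-labelled edges inside N. -/
def IsPathTo {ι : Type*} (N : Finset ι) (e : ι → ι → ℕ → ℕ) (n : ι)
    (l : List ι) : Prop :=
  l ≠ [] ∧ (∀ x ∈ l, x ∈ N) ∧ l.Chain' (fun a b => e a b = id) ∧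
    l.getLast? = some n

theorem List.IsChain.nodup_of_acyclic {α : Type*} {r : α → α → Prop} {l : List α}
    (hl : l.IsChain r) (hr : ∀ a, ¬ Relation.TransGen r a a) : l.Nodup := by
  have : l.Pairwise (Relation.TransGen r) := (hl.imp fun _ _ => Relation.TransGen.single).pairwise
  exact List.nodup_iff_pairwise_ne.2 <| this.imp fun {a _} h => by rintro rfl; exact hr a h

theorem List.finite_setOf_nodup_forall_mem {α : Type*} (s : Finset α) :
    {l : List α | l.Nodup ∧ ∀ x ∈ l, x ∈ s}.Finite := by
  refine (Set.finite_range fun l : {l : List s // l.Nodup} => l.1.map Subtype.val).subset ?_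
  rintro l ⟨hnd, hs⟩
  refine ⟨⟨l.attachWith (· ∈ s) hs, List.Nodup.of_map Subtype.val ?_⟩, by simp⟩
  simpa using hnd

theorem Finite.wellFounded_of_acyclic {α : Type*} [Finite α] {r : α → α → Prop}
    (hr : ∀ a, ¬ Relation.TransGen r a a) : WellFounded r :=
  have : IsTrans α (Relation.TransGen r) := ⟨fun _ _ _ => Relation.TransGen.trans⟩
  have : Std.Irrefl (Relation.TransGen r) := ⟨hr⟩
  Subrelation.wf Relation.TransGen.single (Finite.wellFounded_of_trans_of_irrefl _)

section PathCounting

variable {ι : Type*} {N : Finset ι} {e : ι → ι → ℕ → ℕ}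

variable (N e) in
def IdEdge (a b : ι) : Prop := a ∈ N ∧ b ∈ N ∧ e a b = id

variable (N e) in
noncomputable def pathFlow (inf : ι → ℕ) (n : ι) : ℕ :=
  ∑ᶠ l ∈ {l | IsPathTo N e n l}, l.head?.elim 0 inf

-- `List.Chain'` is a deprecated alias of `List.IsChain`, which carries the API.
theorem isPathTo_iff {n : ι} {l : List ι} :
    IsPathTo N e n l ↔
      l ≠ [] ∧ (∀ x ∈ l, x ∈ N) ∧ l.IsChain (fun a b => e a b = id) ∧ l.getLast? = some n :=
  Iff.rfl

theorem IsPathTo.ne_nil {n : ι} {l : List ι} (h : IsPathTo N e n l) : l ≠ [] := h.1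

theorem IsPathTo.mem {n : ι} {l : List ι} (h : IsPathTo N e n l) : n ∈ N :=
  h.2.1 n (List.mem_of_getLast? h.2.2.2)

theorem IsPathTo.unique {n n' : ι} {l : List ι} (h : IsPathTo N e n l) (h' : IsPathTo N e n' l) :
    n = n' :=
  Option.some_injective _ (h.2.2.2.symm.trans h'.2.2.2)

theorem IsPathTo.isChain_idEdge {n : ι} {l : List ι} (h : IsPathTo N e n l) :
    l.IsChain (IdEdge N e) :=
  h.2.2.1.imp_of_mem_imp fun a b ha hb hab => ⟨h.2.1 a ha, h.2.1 b hb, hab⟩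

theorem setOf_isPathTo_finite (hacyc : ∀ n, ¬ Relation.TransGen (IdEdge N e) n n) (n : ι) :
    {l | IsPathTo N e n l}.Finite :=
  (List.finite_setOf_nodup_forall_mem N).subset fun _ h =>
    ⟨h.isChain_idEdge.nodup_of_acyclic hacyc, h.2.1⟩

theorem isPathTo_append_singleton {n m : ι} {l : List ι} :
    IsPathTo N e n (l ++ [m]) ↔
      m = n ∧ n ∈ N ∧ (l = [] ∨ ∃ n', e n' n = id ∧ IsPathTo N e n' l) := by
  rcases l.eq_nil_or_concat' with rfl | ⟨l, a, rfl⟩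
  · grind [isPathTo_iff]
  · simp [isPathTo_iff, List.isChain_append]
    grind

theorem isPathTo_iff_eq_singleton_or_append {n : ι} (hn : n ∈ N) {l : List ι} :
    IsPathTo N e n l ↔
      l = [n] ∨ ∃ n' ∈ N, e n' n = id ∧ ∃ l', IsPathTo N e n' l' ∧ l = l' ++ [n] := by
  rcases l.eq_nil_or_concat' with rfl | ⟨l, m, rfl⟩
  · simp [isPathTo_iff]
  · grind [isPathTo_append_singleton, IsPathTo.mem, List.append_eq_singleton_iff]

open Classical in
theorem sum_edge_apply_eq_sum_filter (he : ∀ a b, e a b = id ∨ e a b = fun _ => 0)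
    (s : Finset ι) (n : ι) (f : ι → ℕ) :
    ∑ m ∈ s, e m n (f m) = ∑ m ∈ s with e m n = id, f m := by
  rw [Finset.sum_filter]
  refine Finset.sum_congr rfl fun m _ => ?_
  rcases he m n with h | h
  · simp [h]
  · have : (fun _ : ℕ => 0) ≠ id := fun h => by simpa using congrFun h 1
    simp [h, this]

theorem flowEqn_pathFlow (he : ∀ a b, e a b = id ∨ e a b = fun _ => 0)
    (hacyc : ∀ n, ¬ Relation.TransGen (IdEdge N e) n n) (inf : ι → ℕ) :
    FlowEqn N e inf (pathFlow N e inf) := by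
  classical
  intro n hn
  have hfin := setOf_isPathTo_finite hacyc
  simp only [pathFlow, finsum_mem_eq_finite_toFinset_sum _ (hfin _)]
  let appendN : List ι ↪ List ι := ⟨(· ++ [n]), List.append_left_injective [n]⟩
  let pred := {m ∈ N | e m n = id}
  have hpaths : (hfin n).toFinset =
      insert [n] (pred.biUnion fun m => (hfin m).toFinset.map appendN) := by
    ext l
    simp [pred, appendN, isPathTo_iff_eq_singleton_or_append hn, and_assoc, eq_comm]
  have hsingleton : [n] ∉ pred.biUnion fun m => (hfin m).toFinset.map appendN := by
    simp only [Finset.mem_biUnion, Finset.mem_map, Set.Finite.mem_toFinset, not_exists, not_and]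
    intro _ _ l hl hln
    exact hl.ne_nil (by simpa [appendN] using hln)
  have hdisj : (pred : Set ι).PairwiseDisjoint fun m => (hfin m).toFinset.map appendN := by
    intro m _ m' _ hne
    simp only [Function.onFun, Finset.disjoint_left, Finset.mem_map, Set.Finite.mem_toFinset]
    rintro _ ⟨l, hl, rfl⟩ ⟨l', hl', heq⟩
    exact hne (hl.unique (appendN.injective heq ▸ hl'))
  rw [hpaths, Finset.sum_insert hsingleton, Finset.sum_biUnion hdisj,
    sum_edge_apply_eq_sum_filter he]
  refine congrArg (inf n + ·) (Finset.sum_congr rfl fun m _ => ?_)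
  rw [Finset.sum_map]
  refine Finset.sum_congr rfl fun l hl => ?_
  simp [appendN, List.head?_append_of_ne_nil _ ((hfin m).mem_toFinset.1 hl).ne_nil]

theorem FlowEqn.eqOn_of_acyclic (he : ∀ a b, e a b = id ∨ e a b = fun _ => 0)
    (hacyc : ∀ n, ¬ Relation.TransGen (IdEdge N e) n n) {inf flo flo' : ι → ℕ}
    (h : FlowEqn N e inf flo) (h' : FlowEqn N e inf flo') : ∀ n ∈ N, flo n = flo' n := by
  have hwf : WellFounded fun a b : N => IdEdge N e a b :=
    Finite.wellFounded_of_acyclic fun a ha => hacyc a (ha.lift Subtype.val fun _ _ => id)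
  suffices ∀ n : N, flo n = flo' n from fun n hn => this ⟨n, hn⟩
  intro n
  induction n using hwf.induction with
  | _ n ih =>
    obtain ⟨n, hn⟩ := n
    rw [h n hn, h' n hn]
    refine congrArg (inf n + ·) (Finset.sum_congr rfl fun m hm => ?_)
    rcases he m n with hid | hzero
    · rw [hid]
      exact ih ⟨m, hm⟩ ⟨hm, hn, hid⟩
    · rw [hzero]

end PathCounting

theorem stmt15_general {ι : Type*} (N : Finset ι)
    (e : ι → ι → ℕ → ℕ)
    (he : ∀ a b, e a b = id ∨ e a b = fun _ => 0)
    (hacyc : ∀ n, ¬ Relation.TransGen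
      (fun a b => a ∈ N ∧ b ∈ N ∧ e a b = id) n n)
    (inf : ι → ℕ) :
    (∃ flo, FlowEqn N e inf flo) ∧
    (∀ flo flo', FlowEqn N e inf flo → FlowEqn N e inf flo' →
        ∀ n ∈ N, flo n = flo' n) ∧
    (∀ flo, FlowEqn N e inf flo → ∀ n ∈ N,
        ∃ hfin : {l : List ι | IsPathTo N e n l}.Finite,
          flo n = ∑ l ∈ hfin.toFinset, l.head?.elim 0 inf) := by
  have hflow : FlowEqn N e inf (pathFlow N e inf) := flowEqn_pathFlow he hacyc inf
  have huniq : ∀ flo flo', FlowEqn N e inf flo → FlowEqn N e inf flo' →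
      ∀ n ∈ N, flo n = flo' n := fun _ _ => FlowEqn.eqOn_of_acyclic he hacyc
  refine ⟨⟨_, hflow⟩, huniq, fun flo h n hn => ⟨setOf_isPathTo_finite hacyc n, ?_⟩⟩
  rw [huniq _ _ h hflow n hn, pathFlow, finsum_mem_eq_finite_toFinset_sum]

/-- For the path-counting flow domain, if the nonzero (identity) edges form an
acyclic relation, then the flow equation has a unique solution, and the flow at n
counts the paths ending at n, each weighted by the inflow at its start node. -/
theorem stmt15 {ι : Type*} [DecidableEq ι] (N : Finset ι)
    (e : ι → ι → ℕ → ℕ)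
    (he : ∀ a b, e a b = id ∨ e a b = fun _ => 0)
    (hacyc : ∀ n, ¬ Relation.TransGen
      (fun a b => a ∈ N ∧ b ∈ N ∧ e a b = id) n n)
    (inf : ι → ℕ) :
    (∃ flo, FlowEqn N e inf flo) ∧
    (∀ flo flo', FlowEqn N e inf flo → FlowEqn N e inf flo' →
        ∀ n ∈ N, flo n = flo' n) ∧
    (∀ flo, FlowEqn N e inf flo → ∀ n ∈ N,
        ∃ hfin : {l : List ι | IsPathTo N e n l}.Finite,
          flo n = ∑ l ∈ hfin.toFinset, l.head?.elim 0 inf) :=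
  stmt15_general N e he hacyc inf
end

section
/- In the path-counting flow domain, there exists a finite graph and inflow for which the flow equation has no solution: a three-node graph with inflow 1 at node a and 0 elsewhere, edges a → b, b → c, and c → b (all labelled identity), admits no function flow : {a,b,c} → ℕ satisfying the flow equation. -/
/-- The edges a → b, b → c, c → b (identity functions), all others absent. -/
def e16 : Fin 3 → Fin 3 → ℕ → ℕ := fun a b =>
  if (a = 0 ∧ b = 1) ∨ (a = 1 ∧ b = 2) ∨ (a = 2 ∧ b = 1) then id else fun _ => 0

theorem FlowEqn.inflow_add_sum_le {ι : Type*} {N : Finset ι} {e : ι → ι → ℕ → ℕ}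
    {inf flo : ι → ℕ} (h : FlowEqn N e inf flo) {n : ι} (hn : n ∈ N) {S : Finset ι}
    (hS : S ⊆ N) : inf n + ∑ n' ∈ S, e n' n (flo n') ≤ flo n :=
  (h n hn).symm ▸ Nat.add_le_add_left (Finset.sum_le_sum_of_subset hS) _

/-- In the path-counting flow domain, the flow equation can have no solution. -/
theorem stmt16 :
    ¬ ∃ flo : Fin 3 → ℕ,
        FlowEqn Finset.univ e16 (fun n => if n = 0 then 1 else 0) flo := by
  rintro ⟨flo, h⟩
  have ha : 1 ≤ flo 0 := by
    simpa using h.inflow_add_sum_le (Finset.mem_univ 0) (Finset.empty_subset _)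
  have hb : flo 0 + flo 2 ≤ flo 1 := by
    simpa [e16] using h.inflow_add_sum_le (S := {0, 2}) (Finset.mem_univ 1) (Finset.subset_univ _)
  have hc : flo 1 ≤ flo 2 := by
    simpa [e16] using h.inflow_add_sum_le (S := {1}) (Finset.mem_univ 2) (Finset.subset_univ _)
  -- around the cycle b → c → b the flow would have to grow by the inflow at a
  omega
end
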